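/- Let 0 < α < 1/2. For nonzero integers ξ, η with ξ+η ≠ 0 and opposite-sign resonance, the symbol σ^{+,−}(ξ,η) = |ξ+η|·⟨ξ⟩^α·⟨η⟩^α / (2·⟨ξ+η⟩^{1+α}·||ξ|⟨ξ⟩ − |η|⟨η⟩ − |ξ+η|⟨ξ+η⟩|) satisfies |σ^{+,−}(ξ,η)| ≤ C·⟨ξ⟩^α / (⟨ξ+η⟩^{α+1}·⟨η⟩^{1−α}) for a constant C independent of ξ, η. -/

import Mathlib

/-!
Writing `ω(x) = |x|⟨x⟩`, the defect `ω(x) - x²` lies in `[0, 1/2)`. Since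
`ξ² - η² - (ξ+η)² = -2η(ξ+η)`, the resonance function `ω(ξ) - ω(η) - ω(ξ+η)` is within `1` of
`-2η(ξ+η)`, so for nonzero integers `η`, `ξ+η` its absolute value is at least `|η||ξ+η|`.
Together with `⟨η⟩ ≤ 2|η|` this gives `|ξ+η|⟨η⟩ ≤ 2|ω(ξ) - ω(η) - ω(ξ+η)|`, which is exactly the
claimed bound with `C = 1` once `⟨η⟩^α = ⟨η⟩ / ⟨η⟩^(1-α)` is used.
-/

noncomputable def jap (x : ℝ) : ℝ := Real.sqrt (1 + x^2)

noncomputable def sigmaPM (α : ℝ) (ξ η : ℤ) : ℝ :=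
  |(ξ : ℝ) + η| * jap ξ ^ α * jap η ^ α /
    (2 * jap ((ξ : ℝ) + η) ^ (1 + α) *
      |(|(ξ : ℝ)| * jap ξ - |(η : ℝ)| * jap η - |(ξ : ℝ) + η| * jap ((ξ : ℝ) + η))|)

lemma jap_pos (x : ℝ) : 0 < jap x := Real.sqrt_pos.2 (by positivity)

lemma jap_sq (x : ℝ) : jap x ^ 2 = 1 + x ^ 2 := Real.sq_sqrt (by positivity)

lemma abs_lt_jap (x : ℝ) : |x| < jap x := by
  nlinarith [jap_sq x, jap_pos x, abs_nonneg x, sq_abs x]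

lemma jap_le_two_mul_abs {x : ℝ} (hx : 1 ≤ |x|) : jap x ≤ 2 * |x| := by
  nlinarith [jap_sq x, jap_pos x, sq_abs x]

/-- The Boussinesq dispersion relation `ω`. -/
noncomputable def disp (x : ℝ) : ℝ := |x| * jap x

lemma sq_le_disp (x : ℝ) : x ^ 2 ≤ disp x := by
  unfold disp
  nlinarith [abs_lt_jap x, abs_nonneg x, sq_abs x]

lemma disp_sub_sq_lt (x : ℝ) : disp x - x ^ 2 < 1 / 2 := by
  unfold disp
  nlinarith [mul_pos (sub_pos.2 (abs_lt_jap x)) (sub_pos.2 (abs_lt_jap x)), jap_sq x, sq_abs x]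

lemma abs_resonance_add_two_mul_lt (a b : ℝ) :
    |disp a - disp b - disp (a + b) + 2 * (b * (a + b))| < 1 := by
  have hab : disp a - disp b - disp (a + b) + 2 * (b * (a + b)) =
      (disp a - a ^ 2) - (disp b - b ^ 2) - (disp (a + b) - (a + b) ^ 2) := by ring
  rw [hab, abs_lt]
  constructor <;>
    linarith [sq_le_disp a, sq_le_disp b, sq_le_disp (a + b),
      disp_sub_sq_lt a, disp_sub_sq_lt b, disp_sub_sq_lt (a + b)]

lemma abs_mul_abs_le_abs_resonance {a b : ℝ} (hb : 1 ≤ |b|) (hs : 1 ≤ |a + b|) :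
    |b| * |a + b| ≤ |disp a - disp b - disp (a + b)| := by
  have hprod : 1 ≤ |b| * |a + b| := by nlinarith
  have hclose := abs_resonance_add_two_mul_lt a b
  have htri := abs_sub_abs_le_abs_sub (2 * (b * (a + b)))
    (disp a - disp b - disp (a + b) + 2 * (b * (a + b)))
  rw [show 2 * (b * (a + b)) - (disp a - disp b - disp (a + b) + 2 * (b * (a + b))) =
    -(disp a - disp b - disp (a + b)) by ring, abs_neg, abs_mul, abs_mul, abs_two] at htri
  linarith

lemma abs_add_mul_jap_le_two_mul_abs_resonance {a b : ℝ} (hb : 1 ≤ |b|) (hs : 1 ≤ |a + b|) :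
    |a + b| * jap b ≤ 2 * |disp a - disp b - disp (a + b)| := by
  calc |a + b| * jap b ≤ |a + b| * (2 * |b|) :=
        mul_le_mul_of_nonneg_left (jap_le_two_mul_abs hb) (abs_nonneg _)
    _ = 2 * (|b| * |a + b|) := by ring
    _ ≤ 2 * |disp a - disp b - disp (a + b)| := by
        linarith [abs_mul_abs_le_abs_resonance hb hs]

lemma one_le_abs_intCast {n : ℤ} (hn : n ≠ 0) : (1 : ℝ) ≤ |(n : ℝ)| := by
  rw [← Int.cast_abs]
  exact_mod_cast Int.one_le_abs hn

theorem sigmaPM_bound_general (α : ℝ) :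
    ∃ C : ℝ, 0 < C ∧
      ∀ ξ η : ℤ, ξ ≠ 0 → η ≠ 0 → ξ + η ≠ 0 →
        |sigmaPM α ξ η| ≤ C * jap ξ ^ α / (jap ((ξ : ℝ) + η) ^ (α + 1) * jap η ^ (1 - α)) := by
  refine ⟨1, one_pos, fun ξ η _ hη hs => ?_⟩
  have hb : (1 : ℝ) ≤ |(η : ℝ)| := one_le_abs_intCast hη
  have hs' : (1 : ℝ) ≤ |(ξ : ℝ) + η| := by simpa using one_le_abs_intCast hs
  set a : ℝ := (ξ : ℝ)
  set b : ℝ := (η : ℝ)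
  set D := disp a - disp b - disp (a + b)
  have key : |a + b| * jap b ≤ 2 * |D| := abs_add_mul_jap_le_two_mul_abs_resonance hb hs'
  have hja := jap_pos a
  have hjb := jap_pos b
  have hjs := jap_pos (a + b)
  have hD : 0 < |D| := by nlinarith
  have hsig : sigmaPM α ξ η =
      |a + b| * jap a ^ α * jap b ^ α / (2 * jap (a + b) ^ (1 + α) * |D|) := rfl
  have hsplit : jap b ^ α * jap b ^ (1 - α) = jap b := by
    rw [← Real.rpow_add hjb, add_sub_cancel, Real.rpow_one]
  rw [hsig, abs_of_nonneg (by positivity), add_comm α 1,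
    div_le_div_iff₀ (by positivity) (by positivity), one_mul]
  calc |a + b| * jap a ^ α * jap b ^ α * (jap (a + b) ^ (1 + α) * jap b ^ (1 - α))
      = (|a + b| * (jap b ^ α * jap b ^ (1 - α))) * (jap a ^ α * jap (a + b) ^ (1 + α)) := by ring
    _ = (|a + b| * jap b) * (jap a ^ α * jap (a + b) ^ (1 + α)) := by rw [hsplit]
    _ ≤ 2 * |D| * (jap a ^ α * jap (a + b) ^ (1 + α)) := by gcongr
    _ = jap a ^ α * (2 * jap (a + b) ^ (1 + α) * |D|) := by ring

theorem sigmaPM_bound (α : ℝ) (hα : 0 < α) (hα' : α < 1/2) :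
    ∃ C : ℝ, 0 < C ∧
      ∀ ξ η : ℤ, ξ ≠ 0 → η ≠ 0 → ξ + η ≠ 0 →
        |sigmaPM α ξ η| ≤ C * jap ξ ^ α / (jap ((ξ : ℝ) + η) ^ (α + 1) * jap η ^ (1 - α)) :=
  sigmaPM_bound_general α
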